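/- Let A be a k-algebra and r = ∑ r¹ ⊗ r² ∈ A ⊗ A an element such that ∑ (r¹a) ⊗ r² = ∑ (a r¹) ⊗ r² for all a ∈ A (i.e. applying right-multiplication by a to the first tensor factor of r agrees with applying left-multiplication by a). If M is a left A-module, then the homothety ℛ : M ⊗ M → M ⊗ M, ℛ(m ⊗ n) = ∑ (r¹ · m) ⊗ (r² · n), is a solution of the Long equation. -/

import Mathlib

open TensorProduct

noncomputable section

variable {k M : Type*} [Field k] [AddCommGroup M] [Module k M]

/-- The flip map τ : M ⊗ M → M ⊗ M, τ(m ⊗ n) = n ⊗ m. -/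
def tau (k M : Type*) [Field k] [AddCommGroup M] [Module k M] :
    M ⊗[k] M →ₗ[k] M ⊗[k] M := (TensorProduct.comm k M M).toLinearMap

/-- R¹² = R ⊗ id on M ⊗ (M ⊗ M) (transported along the associator). -/
def R12 (R : M ⊗[k] M →ₗ[k] M ⊗[k] M) :
    M ⊗[k] (M ⊗[k] M) →ₗ[k] M ⊗[k] (M ⊗[k] M) :=
  (TensorProduct.assoc k M M M).toLinearMap ∘ₗ
    TensorProduct.map R LinearMap.id ∘ₗ (TensorProduct.assoc k M M M).symm.toLinearMap

/-- R²³ = id ⊗ R on M ⊗ (M ⊗ M). -/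
def R23 (R : M ⊗[k] M →ₗ[k] M ⊗[k] M) :
    M ⊗[k] (M ⊗[k] M) →ₗ[k] M ⊗[k] (M ⊗[k] M) :=
  TensorProduct.map LinearMap.id R

/-- R¹³ = (id ⊗ τ)(R ⊗ id)(id ⊗ τ) on M ⊗ (M ⊗ M). -/
def R13 (R : M ⊗[k] M →ₗ[k] M ⊗[k] M) :
    M ⊗[k] (M ⊗[k] M) →ₗ[k] M ⊗[k] (M ⊗[k] M) :=
  TensorProduct.map LinearMap.id (tau k M) ∘ₗ R12 R ∘ₗ
    TensorProduct.map LinearMap.id (tau k M)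

/-- R is a solution of the Long equation: R¹²R¹³ = R¹³R¹² and R¹²R²³ = R²³R¹². -/
def IsLongSolution (R : M ⊗[k] M →ₗ[k] M ⊗[k] M) : Prop :=
  R12 R ∘ₗ R13 R = R13 R ∘ₗ R12 R ∧ R12 R ∘ₗ R23 R = R23 R ∘ₗ R12 R

end

/-! The hypothesis on `r` says precisely that `ℛ` commutes with `(a • ·) ⊗ id` for every `a ∈ A`.
Both equations are additive in one of their two copies of `ℛ`, so it suffices to check them on
`ℛ¹³` resp. `ℛ¹²` of a pure tensor `a ⊗ b`, i.e. on `(a • ·) ⊗ id ⊗ (b • ·)` resp.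
`(a • ·) ⊗ (b • ·) ⊗ id`. The first commutes with `ℛ¹² = ℛ ⊗ id` through its first factor, the
second with `ℛ²³ = id ⊗ ℛ` through its second factor. -/

open LinearMap

section LongOperators

variable {k M : Type*} [Field k] [AddCommGroup M] [Module k M]

theorem R12_add (T U : M ⊗[k] M →ₗ[k] M ⊗[k] M) : R12 (T + U) = R12 T + R12 U := by
  simp only [R12, map_add_left, add_comp, comp_add]

theorem R12_zero : R12 (0 : M ⊗[k] M →ₗ[k] M ⊗[k] M) = 0 := by
  simp [R12]

theorem R13_add (T U : M ⊗[k] M →ₗ[k] M ⊗[k] M) : R13 (T + U) = R13 T + R13 U := by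
  simp only [R13, R12_add, add_comp, comp_add]

theorem R13_zero : R13 (0 : M ⊗[k] M →ₗ[k] M ⊗[k] M) = 0 := by
  simp [R13, R12_zero]

theorem R12_apply_tmul (T : M ⊗[k] M →ₗ[k] M ⊗[k] M) (x y z : M) :
    R12 T (x ⊗ₜ (y ⊗ₜ z)) = TensorProduct.assoc k M M M (T (x ⊗ₜ y) ⊗ₜ z) := by
  simp [R12]

theorem R12_map (f g : Module.End k M) : R12 (map f g) = map f (g.rTensor M) :=
  ext_threefold' fun x y z => by simp [R12]

theorem R13_map (f g : Module.End k M) : R13 (map f g) = map f (g.lTensor M) :=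
  ext_threefold' fun x y z => by simp [R13, R12, tau]

theorem R12_comp_map_lTensor_comm {T : M ⊗[k] M →ₗ[k] M ⊗[k] M} {f : Module.End k M}
    (hT : T ∘ₗ f.rTensor M = f.rTensor M ∘ₗ T) (g : Module.End k M) :
    R12 T ∘ₗ map f (g.lTensor M) = map f (g.lTensor M) ∘ₗ R12 T := by
  refine ext_threefold' fun x y z => ?_
  have hfx : T (f x ⊗ₜ y) = f.rTensor M (T (x ⊗ₜ y)) := congr($hT (x ⊗ₜ y))
  rw [comp_apply, map_tmul, lTensor_tmul, R12_apply_tmul, hfx, comp_apply, R12_apply_tmul,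
    lTensor_def, map_map_assoc]
  rfl

theorem map_rTensor_comp_R23_comm {T : M ⊗[k] M →ₗ[k] M ⊗[k] M} {g : Module.End k M}
    (hT : T ∘ₗ g.rTensor M = g.rTensor M ∘ₗ T) (f : Module.End k M) :
    map f (g.rTensor M) ∘ₗ R23 T = R23 T ∘ₗ map f (g.rTensor M) := by
  simp only [R23, ← map_comp, comp_id, id_comp, hT]

end LongOperators

section Homothety

variable {k A M : Type*} [Field k] [Semiring A] [Algebra k A] [AddCommGroup M] [Module k M]
  [Module A M] [IsScalarTower k A M] [SMulCommClass A k M]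

variable (M) in
/-- `r ↦ ∑ (r¹ • ·) ⊗ (r² • ·)`. -/
def homothety : A ⊗[k] A →ₗ[k] Module.End k (M ⊗[k] M) :=
  homTensorHomMap (RingHom.id k) M M M M ∘ₗ
    map (Algebra.lsmul k k M).toLinearMap (Algebra.lsmul k k M).toLinearMap

theorem homothety_tmul (a b : A) :
    homothety M (a ⊗ₜ[k] b) = map (Algebra.lsmul k k M a) (Algebra.lsmul k k M b) :=
  rfl

theorem homothety_map_mulRight (a : A) (r : A ⊗[k] A) :
    homothety M (map (mulRight k a) LinearMap.id r) =
      homothety M r ∘ₗ (Algebra.lsmul k k M a).rTensor M := by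
  induction r using TensorProduct.induction_on with
  | zero => simp
  | tmul b c => ext x y; simp [homothety_tmul]
  | add x y hx hy => simp only [map_add, hx, hy, add_comp]

theorem homothety_map_mulLeft (a : A) (r : A ⊗[k] A) :
    homothety M (map (mulLeft k a) LinearMap.id r) =
      (Algebra.lsmul k k M a).rTensor M ∘ₗ homothety M r := by
  induction r using TensorProduct.induction_on with
  | zero => simp
  | tmul b c => ext x y; simp [homothety_tmul]
  | add x y hx hy => simp only [map_add, hx, hy, comp_add]

theorem homothety_comp_rTensor_lsmul {r : A ⊗[k] A}
    (hr : ∀ a : A, map (mulRight k a) LinearMap.id r = map (mulLeft k a) LinearMap.id r) (a : A) :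
    homothety M r ∘ₗ (Algebra.lsmul k k M a).rTensor M =
      (Algebra.lsmul k k M a).rTensor M ∘ₗ homothety M r := by
  rw [← homothety_map_mulRight, hr, homothety_map_mulLeft]

theorem R12_homothety_comp_R13_homothety {r : A ⊗[k] A}
    (hr : ∀ a : A, map (mulRight k a) LinearMap.id r = map (mulLeft k a) LinearMap.id r)
    (s : A ⊗[k] A) :
    R12 (homothety M r) ∘ₗ R13 (homothety M s) = R13 (homothety M s) ∘ₗ R12 (homothety M r) := by
  induction s using TensorProduct.induction_on with
  | zero => simp [R13_zero]
  | tmul a b =>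
    rw [homothety_tmul, R13_map]
    exact R12_comp_map_lTensor_comm (homothety_comp_rTensor_lsmul hr a) _
  | add x y hx hy => simp only [map_add, R13_add, add_comp, comp_add, hx, hy]

theorem R12_homothety_comp_R23_homothety {r : A ⊗[k] A}
    (hr : ∀ a : A, map (mulRight k a) LinearMap.id r = map (mulLeft k a) LinearMap.id r)
    (s : A ⊗[k] A) :
    R12 (homothety M s) ∘ₗ R23 (homothety M r) = R23 (homothety M r) ∘ₗ R12 (homothety M s) := by
  induction s using TensorProduct.induction_on with
  | zero => simp [R12_zero]
  | tmul a b =>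
    rw [homothety_tmul, R12_map]
    exact map_rTensor_comp_R23_comm (homothety_comp_rTensor_lsmul hr b) _
  | add x y hx hy => simp only [map_add, R12_add, add_comp, comp_add, hx, hy]

theorem isLongSolution_homothety {r : A ⊗[k] A}
    (hr : ∀ a : A, map (mulRight k a) LinearMap.id r = map (mulLeft k a) LinearMap.id r) :
    IsLongSolution (homothety M r) :=
  ⟨R12_homothety_comp_R13_homothety hr r, R12_homothety_comp_R23_homothety hr r⟩

end Homothety

theorem long_equation_homothety
    {k : Type*} [Field k] {A : Type*} [Ring A] [Algebra k A]
    {M : Type*} [AddCommGroup M] [Module k M] [Module A M]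
    [IsScalarTower k A M] [SMulCommClass A k M]
    (r : A ⊗[k] A)
    (hr : ∀ a : A,
      TensorProduct.map (LinearMap.mulRight k a) LinearMap.id r =
      TensorProduct.map (LinearMap.mulLeft k a) LinearMap.id r) :
    IsLongSolution
      (TensorProduct.homTensorHomMap (RingHom.id k) M M M M
        (TensorProduct.map (Algebra.lsmul k k M).toLinearMap
          (Algebra.lsmul k k M).toLinearMap r)) :=
  isLongSolution_homothety hr
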